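/- arXiv:1508.02479 — 2 statements merged into one kernel-verified Lean document; each statement's English description precedes it below -/
import Mathlib

section
/- Let u₁,…,u_Y ∈ ℝ^d have pairwise disjoint supports and let U ∈ ℝ^{Y×d} have rows u_y. Then the shared Frobenius norm of U equals its Frobenius norm: inf_{AV=U} ‖A‖_{2→∞}·‖V‖_F = sqrt(∑_y ‖u_y‖₂²). -/
noncomputable def frob {r c : ℕ} (U : Matrix (Fin r) (Fin c) ℝ) : ℝ :=
  Real.sqrt (∑ i, ∑ j, (U i j) ^ 2)

/-- maximum ℓ₂ norm of the rows -/
noncomputable def row2inf {r c : ℕ} (U : Matrix (Fin r) (Fin c) ℝ) : ℝ :=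
  ⨆ i, Real.sqrt (∑ j, (U i j) ^ 2)

/-- shared Frobenius norm: infimum over factorizations of (max row norm) × (Frobenius norm) -/
noncomputable def sharedNorm {Y d : ℕ} (U : Matrix (Fin Y) (Fin d) ℝ) : ℝ :=
  sInf { x | ∃ (M : ℕ) (A : Matrix (Fin Y) (Fin M) ℝ) (V : Matrix (Fin M) (Fin d) ℝ),
    A * V = U ∧ x = row2inf A * frob V }

/-- trace (nuclear) norm via its factorization characterization -/
noncomputable def traceNorm {Y d : ℕ} (U : Matrix (Fin Y) (Fin d) ℝ) : ℝ :=
  sInf { x | ∃ (M : ℕ) (A : Matrix (Fin Y) (Fin M) ℝ) (V : Matrix (Fin M) (Fin d) ℝ),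
    A * V = U ∧ x = frob A * frob V }

/-- max norm (γ₂ norm) -/
noncomputable def maxNorm {Y d : ℕ} (U : Matrix (Fin Y) (Fin d) ℝ) : ℝ :=
  sInf { x | ∃ (M : ℕ) (A : Matrix (Fin Y) (Fin M) ℝ) (V : Matrix (Fin M) (Fin d) ℝ),
    A * V = U ∧ x = row2inf A * row2inf V.transpose }

/-- Disjoint-support rows: the shared Frobenius norm equals the Frobenius norm. -/
theorem sharedNorm_disjoint_support {Y d : ℕ} (u : Fin Y → Fin d → ℝ)
    (hdisj : ∀ y₁ y₂, y₁ ≠ y₂ → ∀ j, u y₁ j = 0 ∨ u y₂ j = 0)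
    (U : Matrix (Fin Y) (Fin d) ℝ) (hU : ∀ y j, U y j = u y j) :
    sharedNorm U = Real.sqrt (∑ y, ∑ j, (u y j) ^ 2) := by
  have hfrobU : frob U = Real.sqrt (∑ y, ∑ j, (u y j) ^ 2) := by
    unfold frob
    congr 1
    exact Finset.sum_congr rfl fun y _ => Finset.sum_congr rfl fun j _ => by rw [hU]
  rw [← hfrobU]
  have hmem : frob U ∈ { x | ∃ (M : ℕ) (A : Matrix (Fin Y) (Fin M) ℝ)
      (V : Matrix (Fin M) (Fin d) ℝ), A * V = U ∧ x = row2inf A * frob V } := by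
    refine ⟨Y, 1, U, Matrix.one_mul U, ?_⟩
    rcases Nat.eq_zero_or_pos Y with h0 | hpos
    · subst h0
      have h1 : row2inf (1 : Matrix (Fin 0) (Fin 0) ℝ) = 0 := Real.iSup_of_isEmpty _
      have h2 : frob U = 0 := by simp [frob]
      rw [h1, h2, zero_mul]
    · have h1 : row2inf (1 : Matrix (Fin Y) (Fin Y) ℝ) = 1 := by
        unfold row2inf
        have hrow : ∀ i : Fin Y,
            Real.sqrt (∑ j, ((1 : Matrix (Fin Y) (Fin Y) ℝ) i j) ^ 2) = 1 := by
          intro i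
          have hs : (∑ j, ((1 : Matrix (Fin Y) (Fin Y) ℝ) i j) ^ 2) = 1 := by
            simp [Matrix.one_apply, ite_pow, Finset.sum_ite_eq]
          rw [hs, Real.sqrt_one]
        simp_rw [hrow]
        haveI : Nonempty (Fin Y) := ⟨⟨0, hpos⟩⟩
        exact ciSup_const
      rw [h1, one_mul]
  have hlb : ∀ x ∈ { x | ∃ (M : ℕ) (A : Matrix (Fin Y) (Fin M) ℝ)
      (V : Matrix (Fin M) (Fin d) ℝ), A * V = U ∧ x = row2inf A * frob V },
      frob U ≤ x := by
    rintro x ⟨M, A, V, hAV, rfl⟩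
    have ha : 0 ≤ row2inf A := Real.iSup_nonneg fun i => Real.sqrt_nonneg _
    have key : ∑ y, ∑ j, (U y j) ^ 2 ≤ (row2inf A) ^ 2 * ∑ m, ∑ j, (V m j) ^ 2 := by
      rw [show (∑ y, ∑ j, (U y j) ^ 2) = ∑ j, ∑ y, (U y j) ^ 2 from Finset.sum_comm]
      rw [show (∑ m, ∑ j, (V m j) ^ 2) = ∑ j, ∑ m, (V m j) ^ 2 from Finset.sum_comm]
      rw [Finset.mul_sum]
      refine Finset.sum_le_sum fun j _ => ?_
      by_cases hex : ∃ y, U y j ≠ 0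
      · obtain ⟨y₀, hy₀⟩ := hex
        have hsum : ∑ y, (U y j) ^ 2 = (U y₀ j) ^ 2 := by
          refine Finset.sum_eq_single y₀ (fun y _ hne => ?_) (fun h => absurd (Finset.mem_univ y₀) h)
          rcases hdisj y y₀ hne j with h | h
          · rw [hU, h]; ring
          · exact absurd (by rw [hU, h] : U y₀ j = 0) hy₀
        rw [hsum]
        have hrow : ∑ m, (A y₀ m) ^ 2 ≤ (row2inf A) ^ 2 := by
          have h1 : Real.sqrt (∑ m, (A y₀ m) ^ 2) ≤ row2inf A := by
            unfold row2inf
            exact le_ciSup (Set.Finite.bddAbove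
              (Set.finite_range fun i => Real.sqrt (∑ m, (A i m) ^ 2))) y₀
          calc ∑ m, (A y₀ m) ^ 2 = (Real.sqrt (∑ m, (A y₀ m) ^ 2)) ^ 2 :=
                (Real.sq_sqrt (by positivity)).symm
            _ ≤ (row2inf A) ^ 2 := pow_le_pow_left₀ (Real.sqrt_nonneg _) h1 2
        have hCS : (U y₀ j) ^ 2 ≤ (∑ m, (A y₀ m) ^ 2) * ∑ m, (V m j) ^ 2 := by
          have hentry : U y₀ j = ∑ m, A y₀ m * V m j := by
            rw [← hAV, Matrix.mul_apply]
          rw [hentry]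
          exact Finset.sum_mul_sq_le_sq_mul_sq _ _ _
        calc (U y₀ j) ^ 2 ≤ (∑ m, (A y₀ m) ^ 2) * ∑ m, (V m j) ^ 2 := hCS
          _ ≤ (row2inf A) ^ 2 * ∑ m, (V m j) ^ 2 :=
            mul_le_mul_of_nonneg_right hrow (by positivity)
      · push_neg at hex
        have hz : ∑ y, (U y j) ^ 2 = 0 :=
          Finset.sum_eq_zero fun y _ => by rw [hex y]; ring
        rw [hz]; positivity
    have hfinal : frob U ≤ row2inf A * frob V := by
      unfold frob
      calc Real.sqrt (∑ y, ∑ j, (U y j) ^ 2)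
          ≤ Real.sqrt ((row2inf A) ^ 2 * ∑ m, ∑ j, (V m j) ^ 2) := Real.sqrt_le_sqrt key
        _ = row2inf A * Real.sqrt (∑ m, ∑ j, (V m j) ^ 2) := by
            rw [Real.sqrt_mul (by positivity), Real.sqrt_sq ha]
    exact hfinal
  exact le_antisymm (csInf_le ⟨frob U, hlb⟩ hmem) (le_csInf ⟨_, hmem⟩ hlb)
end

section
/- Let u ∈ ℝ^d, a ∈ ℝ^Y, and let U ∈ ℝ^{Y×d} have rows a_y · u (factor scaling). Then the shared Frobenius norm of U equals (max_y |a_y|)·‖u‖₂. -/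
/-- Factor scaling: rows `a_y · u` give shared norm `(max_y |a_y|) · ‖u‖₂`. -/
theorem sharedNorm_factor_scaling {Y d : ℕ} (hY : 0 < Y) (u : Fin d → ℝ)
    (a : Fin Y → ℝ) (U : Matrix (Fin Y) (Fin d) ℝ)
    (hU : ∀ y j, U y j = a y * u j) :
    sharedNorm U = (⨆ y, |a y|) * Real.sqrt (∑ j, (u j) ^ 2) := by
  have hYne : Nonempty (Fin Y) := ⟨⟨0, hY⟩⟩
  set L : ℝ := (⨆ y, |a y|) * Real.sqrt (∑ j, (u j) ^ 2) with hL
  -- Membership: factor U = A * V with A y 0 = a y, V 0 j = u j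
  have hmem : L ∈ { x | ∃ (M : ℕ) (A : Matrix (Fin Y) (Fin M) ℝ)
      (V : Matrix (Fin M) (Fin d) ℝ), A * V = U ∧ x = row2inf A * frob V } := by
    refine ⟨1, Matrix.of (fun y _ => a y), Matrix.of (fun _ j => u j), ?_, ?_⟩
    · ext y j
      simp [Matrix.mul_apply, hU]
    · rw [hL]
      congr 1
      · unfold row2inf
        congr 1
        ext y
        simp [Real.sqrt_sq_eq_abs]
      · unfold frob
        simp
  -- Lower bound: every element of the set is ≥ L
  have hlb : ∀ x ∈ { x | ∃ (M : ℕ) (A : Matrix (Fin Y) (Fin M) ℝ)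
      (V : Matrix (Fin M) (Fin d) ℝ), A * V = U ∧ x = row2inf A * frob V }, L ≤ x := by
    rintro x ⟨M, A, V, hAV, rfl⟩
    have hfrobV : 0 ≤ frob V := Real.sqrt_nonneg _
    have hrowA : 0 ≤ row2inf A := by
      refine le_ciSup_of_le (Set.Finite.bddAbove (Set.finite_range _)) ⟨0, hY⟩ ?_
      exact Real.sqrt_nonneg _
    have key : ∀ y : Fin Y, |a y| * Real.sqrt (∑ j, (u j) ^ 2) ≤ row2inf A * frob V := by
      intro y
      have h1 : |a y| * Real.sqrt (∑ j, (u j) ^ 2) = Real.sqrt (∑ j, (U y j) ^ 2) := by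
        rw [← Real.sqrt_sq_eq_abs, ← Real.sqrt_mul (sq_nonneg _), Finset.mul_sum]
        congr 1
        exact Finset.sum_congr rfl fun j _ => by rw [hU y j]; ring
      rw [h1]
      have h2 : ∀ j, (U y j) ^ 2 ≤ (∑ m, (A y m) ^ 2) * (∑ m, (V m j) ^ 2) := by
        intro j
        rw [← hAV]
        simp only [Matrix.mul_apply]
        exact Finset.sum_mul_sq_le_sq_mul_sq Finset.univ (fun m => A y m) (fun m => V m j)
      calc Real.sqrt (∑ j, (U y j) ^ 2)
          ≤ Real.sqrt (∑ j, (∑ m, (A y m) ^ 2) * (∑ m, (V m j) ^ 2)) :=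
            Real.sqrt_le_sqrt (Finset.sum_le_sum fun j _ => h2 j)
        _ = Real.sqrt (∑ m, (A y m) ^ 2) * frob V := by
            rw [← Finset.mul_sum, Real.sqrt_mul (Finset.sum_nonneg fun m _ => sq_nonneg _)]
            unfold frob
            rw [Finset.sum_comm]
        _ ≤ row2inf A * frob V := by
            refine mul_le_mul_of_nonneg_right ?_ hfrobV
            exact le_ciSup (f := fun i => Real.sqrt (∑ m, (A i m) ^ 2))
              (Set.Finite.bddAbove (Set.finite_range _)) y
    rw [hL]
    rcases le_or_gt (Real.sqrt (∑ j, (u j) ^ 2)) 0 with hs | hs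
    · have hs0 : Real.sqrt (∑ j, (u j) ^ 2) = 0 :=
        le_antisymm hs (Real.sqrt_nonneg _)
      rw [hs0, mul_zero]
      exact mul_nonneg hrowA hfrobV
    · have hsup : (⨆ y, |a y|) ≤ row2inf A * frob V / Real.sqrt (∑ j, (u j) ^ 2) :=
        ciSup_le fun y => (le_div_iff₀ hs).2 (key y)
      calc (⨆ y, |a y|) * Real.sqrt (∑ j, (u j) ^ 2)
          ≤ (row2inf A * frob V / Real.sqrt (∑ j, (u j) ^ 2)) *
            Real.sqrt (∑ j, (u j) ^ 2) :=
            mul_le_mul_of_nonneg_right hsup (le_of_lt hs)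
        _ = row2inf A * frob V := div_mul_cancel₀ _ (ne_of_gt hs)
  exact le_antisymm (csInf_le ⟨L, fun x hx => hlb x hx⟩ hmem)
    (le_csInf ⟨L, hmem⟩ hlb)
end
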